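/- arXiv:1904.06309 — 4 statements merged into one kernel-verified Lean document; each statement's English description precedes it below -/
import Mathlib

section
/- In the elimination algorithm, if for all phases l and arms a the estimates satisfy |û_l(a) − μ(a)| ≤ 2^{-l-1}, then: (1) the best arm (arm 1) is never eliminated, i.e., û_l(1) ≥ max_k û_l(k) − 2^{-l} for all l; and (2) every arm a surviving to phase l+1 satisfies μ(a) ≥ μ(1) − 2^{-l+1}. -/
/-! With accuracy `ε = 2^(-l-1)`, the elimination threshold `2^(-l) = 2ε` is exactly the width
needed for the best arm's estimate to stay within reach of any other estimate, so the best arm is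
never eliminated. Any arm that survives phase `l` was therefore compared against the best arm
itself, and two more errors of size `ε` turn the estimated gap `≤ 2ε` into a true gap `≤ 4ε`. -/

lemma sub_two_mul_le_of_abs_sub_le {u u' m m' ε : ℝ} (h : |u - m| ≤ ε) (h' : |u' - m'| ≤ ε)
    (hm : m ≤ m') : u - 2 * ε ≤ u' := by
  linarith [(abs_le.1 h).2, (abs_le.1 h').1]

lemma sub_four_mul_le_of_abs_sub_le {u u' m m' ε : ℝ} (h : |u - m| ≤ ε) (h' : |u' - m'| ≤ ε)
    (hu : u' - 2 * ε ≤ u) : m' - 4 * ε ≤ m := by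
  linarith [(abs_le.1 h).2, (abs_le.1 h').1]

lemma two_rpow_neg_eq_two_mul (l : ℝ) : (2 : ℝ) ^ (-l) = 2 * 2 ^ (-l - 1) := by
  rw [Real.rpow_sub_one two_ne_zero]; ring

lemma two_rpow_neg_add_one_eq_four_mul (l : ℝ) : (2 : ℝ) ^ (-l + 1) = 4 * 2 ^ (-l - 1) := by
  rw [Real.rpow_add_one two_ne_zero, two_rpow_neg_eq_two_mul]; ring

lemma mem_of_forall_survives {α : Type*} {A : ℕ → Finset α} {P : ℕ → α → Prop} {s : α}
    (helim : ∀ l ≥ 1, ∀ a, a ∈ A (l + 1) ↔ a ∈ A l ∧ P l a) (hinit : s ∈ A 1)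
    (hsurv : ∀ l ≥ 1, P l s) : ∀ l ≥ 1, s ∈ A l := by
  intro l hl
  induction l, hl using Nat.le_induction with
  | base => exact hinit
  | succ n hn ih => exact (helim n hn s).2 ⟨ih, hsurv n hn⟩

/-- In the elimination algorithm, if all estimates satisfy `|uh l a - μa a| ≤ 2^(-l-1)`,
then: (1) the best arm `astar` is never eliminated, i.e. for all phases `l ≥ 1` and all
active arms `k`, `uh l k - 2^(-l) ≤ uh l astar`; and (2) every arm surviving to phase
`l+1` satisfies `μa a ≥ μa astar - 2^(-l+1)`. -/
theorem stmt7 (K : ℕ) (μa : Fin K → ℝ) (astar : Fin K)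
    (hbest : ∀ k, μa k ≤ μa astar)
    (uh : ℕ → Fin K → ℝ)
    (hconc : ∀ l ≥ 1, ∀ a : Fin K, |uh l a - μa a| ≤ (2 : ℝ) ^ (-(l : ℝ) - 1))
    (A : ℕ → Finset (Fin K))
    (hinit : ∀ a, a ∈ A 1)
    (helim : ∀ l ≥ 1, ∀ a : Fin K,
      (a ∈ A (l + 1) ↔ a ∈ A l ∧ ∀ k ∈ A l, uh l k - (2 : ℝ) ^ (-(l : ℝ)) ≤ uh l a)) :
    (∀ l ≥ 1, ∀ k ∈ A l, uh l k - (2 : ℝ) ^ (-(l : ℝ)) ≤ uh l astar) ∧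
      (∀ l ≥ 1, ∀ a ∈ A (l + 1), μa astar - (2 : ℝ) ^ (-(l : ℝ) + 1) ≤ μa a) := by
  have best_survives : ∀ l ≥ 1, ∀ k ∈ A l, uh l k - (2 : ℝ) ^ (-(l : ℝ)) ≤ uh l astar :=
    fun l hl k _ => two_rpow_neg_eq_two_mul (l : ℝ) ▸
      sub_two_mul_le_of_abs_sub_le (hconc l hl k) (hconc l hl astar) (hbest k)
  have best_active : ∀ l ≥ 1, astar ∈ A l :=
    mem_of_forall_survives helim (hinit astar) best_survives
  refine ⟨best_survives, fun l hl a ha => ?_⟩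
  have hgap := ((helim l hl a).1 ha).2 astar (best_active l hl)
  rw [two_rpow_neg_eq_two_mul] at hgap
  rw [two_rpow_neg_add_one_eq_four_mul]
  exact sub_four_mul_le_of_abs_sub_le (hconc l hl a) (hconc l hl astar) hgap
end

section
/- In the elimination algorithm, under the event that |û_l(a) − μ(a)| ≤ 2^{-l-1} for all phases l and active arms a, any arm i with gap Δ_i = μ(1) − μ(i) > 0 is eliminated by the end of phase l_i = ⌈log_2(1/Δ_i)⌉ + 1; that is, û_{l_i}(1) ≥ û_{l_i}(i) + 2^{-l_i}. -/
/-!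
Since `lᵢ - 1 ≥ log₂ (1/Δ)`, the elimination threshold satisfies `2^{-lᵢ} ≤ Δ/2`. Both estimates
are within `2^{-lᵢ-1}` of their means, so they are separated by at least
`Δ - 2^{-lᵢ} ≥ 2^{-lᵢ}`.
-/

namespace Real

theorem le_zpow_ceil_logb {b x : ℝ} (hb : 1 < b) (hx : 0 < x) : x ≤ b ^ ⌈logb b x⌉ := by
  calc x = b ^ logb b x := (rpow_logb (by linarith) hb.ne' hx).symm
    _ ≤ b ^ (⌈logb b x⌉ : ℝ) := rpow_le_rpow_of_exponent_le hb.le (Int.le_ceil _)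
    _ = b ^ ⌈logb b x⌉ := rpow_intCast b _

theorem zpow_neg_ceil_logb_inv_le {b x : ℝ} (hb : 1 < b) (hx : 0 < x) :
    b ^ (-⌈logb b x⁻¹⌉) ≤ x := by
  rw [zpow_neg, inv_le_comm₀ (zpow_pos (by linarith) _) hx]
  exact le_zpow_ceil_logb hb (inv_pos.mpr hx)

end Real

theorem add_le_of_abs_sub_le_half_of_two_mul_le_sub {u₁ u₂ μ₁ μ₂ ε : ℝ}
    (hgap : 2 * ε ≤ μ₁ - μ₂) (h₁ : |u₁ - μ₁| ≤ ε / 2) (h₂ : |u₂ - μ₂| ≤ ε / 2) :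
    u₂ + ε ≤ u₁ := by
  linarith [(abs_le.mp h₁).1, (abs_le.mp h₂).2]

theorem stmt8_general (K : ℕ) (μa : Fin K → ℝ) (astar i : Fin K)
    (Δ : ℝ) (hΔdef : Δ = μa astar - μa i) (hΔ : 0 < Δ)
    (li : ℤ) (hli : li = ⌈Real.logb 2 (1 / Δ)⌉ + 1)
    (uh : Fin K → ℝ)
    (hconc_star : |uh astar - μa astar| ≤ (2 : ℝ) ^ (-li - 1))
    (hconc_i : |uh i - μa i| ≤ (2 : ℝ) ^ (-li - 1)) :
    uh i + (2 : ℝ) ^ (-li) ≤ uh astar := by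
  have hhalf : (2 : ℝ) ^ (-li - 1) = 2 ^ (-li) / 2 := by
    rw [zpow_sub_one₀ two_ne_zero, div_eq_mul_inv]
  have hgap : 2 * (2 : ℝ) ^ (-li) ≤ Δ := by
    calc 2 * (2 : ℝ) ^ (-li) = 2 ^ (-⌈Real.logb 2 Δ⁻¹⌉) := by
          rw [hli, ← one_div, ← zpow_one_add₀ two_ne_zero]; ring_nf
      _ ≤ Δ := Real.zpow_neg_ceil_logb_inv_le one_lt_two hΔ
  rw [hhalf] at hconc_star hconc_i
  exact add_le_of_abs_sub_le_half_of_two_mul_le_sub (hΔdef ▸ hgap) hconc_star hconc_i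

/-- Under the concentration event, any arm `i` with gap `Δ = μa astar - μa i > 0` is
eliminated by the end of phase `lᵢ = ⌈log₂ (1/Δ)⌉ + 1`:
`uh lᵢ astar ≥ uh lᵢ i + 2^(-lᵢ)`. -/
theorem stmt8 (K : ℕ) (μa : Fin K → ℝ) (astar i : Fin K)
    (hbest : ∀ k, μa k ≤ μa astar)
    (Δ : ℝ) (hΔdef : Δ = μa astar - μa i) (hΔ : 0 < Δ)
    (li : ℤ) (hli : li = ⌈Real.logb 2 (1 / Δ)⌉ + 1)
    (uh : Fin K → ℝ)
    (hconc_star : |uh astar - μa astar| ≤ (2 : ℝ) ^ (-li - 1))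
    (hconc_i : |uh i - μa i| ≤ (2 : ℝ) ^ (-li - 1)) :
    uh i + (2 : ℝ) ^ (-li) ≤ uh astar :=
  stmt8_general K μa astar i Δ hΔdef hΔ li hli uh hconc_star hconc_i
end

section
/- For any positive definite V ∈ R^{d×d} and any vector x ∈ R^d, if Ṽ ⪰ V̄ ≻ 0 are positive definite matrices with det(Ṽ)/det(V̄) ≤ 2 and V̄ ⪯ Ṽ, then x^T V̄^{-1} x ≤ (det(Ṽ)/det(V̄))·x^T Ṽ^{-1} x ≤ 2·x^T Ṽ^{-1} x. -/
/-!
Whitening by `T = (Ṽ⁻¹)^{1/2}` reduces to the case `Ṽ = 1`. Then `M = T V̄ T ⪯ 1` has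
eigenvalues `μᵢ ∈ (0, 1]`, so each `μᵢ⁻¹ ≤ ∏ⱼ μⱼ⁻¹ = (det M)⁻¹`, i.e. `M⁻¹ ⪯ (det M)⁻¹ • 1`;
conjugating back by `T` and using `det M = det V̄ / det Ṽ` gives `V̄⁻¹ ⪯ (det Ṽ / det V̄) • Ṽ⁻¹`.
-/

open Matrix
open scoped MatrixOrder

namespace Matrix

variable {n : Type*} [Fintype n] [DecidableEq n]

lemma PosDef.inv_le_inv_det_smul_one {M : Matrix n n ℝ} (hM : M.PosDef) (hM1 : M ≤ 1) :
    M⁻¹ ≤ M.det⁻¹ • 1 := by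
  have hμ := hM.1.spectrum_real_eq_range_eigenvalues
  have hspec : ∀ t ∈ spectrum ℝ M, 0 < t ∧ t ≤ 1 := by
    rw [hμ]
    rintro _ ⟨i, rfl⟩
    exact ⟨hM.eigenvalues_pos i, (CFC.le_one_iff M hM.1.isSelfAdjoint).mp hM1 _
      (hM.1.eigenvalues_mem_spectrum_real i)⟩
  have hdet_le : ∀ t ∈ spectrum ℝ M, M.det ≤ t := by
    rw [hμ]
    rintro _ ⟨i, rfl⟩
    rw [hM.1.det_eq_prod_eigenvalues]
    simpa using Finset.prod_le_prod_of_subset_of_le_one (Finset.subset_univ {i})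
      (fun j _ => (hspec _ (hM.1.eigenvalues_mem_spectrum_real j)).1.le)
      (fun j _ _ => (hspec _ (hM.1.eigenvalues_mem_spectrum_real j)).2)
  have hinv : cfc (fun t : ℝ => t⁻¹) M = M⁻¹ := by
    simpa [coe_units_inv] using cfc_inv_id (R := ℝ) hM.isUnit.unit hM.1.isSelfAdjoint
  rw [← hinv, ← Algebra.algebraMap_eq_smul_one]
  exact cfc_le_algebraMap _ _ _ (fun t ht => inv_anti₀ hM.det_pos (hdet_le t ht))
    (hf := continuousOn_id.inv₀ fun t ht => (hspec t ht).1.ne')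

lemma PosDef.inv_le_det_div_smul_inv {A B : Matrix n n ℝ} (hA : A.PosDef) (hB : B.PosDef)
    (hAB : A ≤ B) : A⁻¹ ≤ (B.det / A.det) • B⁻¹ := by
  set T := CFC.sqrt B⁻¹
  have hT : T.PosDef := isStrictlyPositive_iff_posDef.mp hB.inv.isStrictlyPositive.sqrt
  have hTdet : IsUnit T.det := (isUnit_iff_isUnit_det T).mp hT.isUnit
  have hTT : T * T = B⁻¹ := CFC.sqrt_mul_sqrt_self _ hB.inv.posSemidef.nonneg
  have hTBT : T * B * T = 1 := by
    have hB' : B = T⁻¹ * T⁻¹ := by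
      rw [← Matrix.mul_inv_rev, hTT, nonsing_inv_nonsing_inv _ hB.det_pos.ne'.isUnit]
    rw [hB', ← mul_assoc, mul_nonsing_inv _ hTdet, one_mul, nonsing_inv_mul _ hTdet]
  set M := T * A * T
  have hM : M.PosDef := by
    have h := hA.conjTranspose_mul_mul_same (mulVec_injective_iff_isUnit.mpr hT.isUnit)
    rwa [hT.1.eq] at h
  have hM1 : M ≤ 1 := hTBT ▸ hT.1.isSelfAdjoint.conjugate_le_conjugate hAB
  have hMdet : M.det⁻¹ = B.det / A.det := by
    rw [det_mul, det_mul, mul_right_comm, ← det_mul, hTT, det_nonsing_inv, Ring.inverse_eq_inv]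
    field_simp
  have hAinv : A⁻¹ = T * M⁻¹ * T := by
    rw [Matrix.mul_inv_rev, Matrix.mul_inv_rev, ← mul_assoc, ← mul_assoc,
      mul_nonsing_inv _ hTdet, one_mul, mul_assoc, nonsing_inv_mul _ hTdet, mul_one]
  calc A⁻¹ = T * M⁻¹ * T := hAinv
    _ ≤ T * (M.det⁻¹ • 1) * T :=
      hT.1.isSelfAdjoint.conjugate_le_conjugate (hM.inv_le_inv_det_smul_one hM1)
    _ = (B.det / A.det) • B⁻¹ := by rw [mul_smul_one, smul_mul, hTT, hMdet]

end Matrix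

/-- Determinant ratio controls norm ratio: for positive definite matrices
`V̄ ⪯ Ṽ` with `det Ṽ / det V̄ ≤ 2`, and any `x`,
`xᵀ V̄⁻¹ x ≤ (det Ṽ / det V̄) * xᵀ Ṽ⁻¹ x ≤ 2 * xᵀ Ṽ⁻¹ x`. -/
theorem stmt18 (d : ℕ) (Vb Vt : Matrix (Fin d) (Fin d) ℝ)
    (hVb : Vb.PosDef) (hVt : Vt.PosDef) (hle : (Vt - Vb).PosSemidef)
    (hdet : Vt.det / Vb.det ≤ 2) (x : Fin d → ℝ) :
    x ⬝ᵥ (Vb⁻¹ *ᵥ x) ≤ (Vt.det / Vb.det) * (x ⬝ᵥ (Vt⁻¹ *ᵥ x)) ∧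
      (Vt.det / Vb.det) * (x ⬝ᵥ (Vt⁻¹ *ᵥ x)) ≤ 2 * (x ⬝ᵥ (Vt⁻¹ *ᵥ x)) := by
  have hnorm : 0 ≤ x ⬝ᵥ (Vt⁻¹ *ᵥ x) := by
    simpa using hVt.inv.posSemidef.dotProduct_mulVec_nonneg x
  have hinv : Vb⁻¹ ≤ (Vt.det / Vb.det) • Vt⁻¹ := hVb.inv_le_det_div_smul_inv hVt (le_iff.mpr hle)
  have hgap := (le_iff.mp hinv).dotProduct_mulVec_nonneg x
  rw [star_trivial, sub_mulVec, dotProduct_sub, smul_mulVec, dotProduct_smul, smul_eq_mul] at hgap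
  exact ⟨sub_nonneg.mp hgap, mul_le_mul_of_nonneg_right hdet hnorm⟩
end

section
/- Epoch-count bound: if P epochs partition T time steps such that each epoch j either has length at least α or satisfies log(det V_j / det V_{j-1}) > D/α, and Σ_j log(det V_j / det V_{j-1}) ≤ R, then P ≤ ⌈T/α⌉ + ⌈R·α/D⌉; choosing α = √(D·T/R) gives P = O(√(T·R/D)). -/
open Finset

/-!
Split the epochs into long ones (`α ≤ n j`) and those with a large log-det increment
(`D / α < g j`). Each epoch satisfies `1 ≤ n j / α + g j / (D / α)`, so summing over all
epochs gives `P ≤ T / α + R * α / D`. The choice `α = √(D T / R)` balances the two terms,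
each becoming `√(T R / D)`.
-/

lemma one_le_div_add_div_of_le_or_le {x y a b : ℝ} (hx : 0 ≤ x) (hy : 0 ≤ y)
    (ha : 0 < a) (hb : 0 < b) (h : a ≤ x ∨ b ≤ y) : 1 ≤ x / a + y / b := by
  have hxa : 0 ≤ x / a := div_nonneg hx ha.le
  have hyb : 0 ≤ y / b := div_nonneg hy hb.le
  rcases h with hax | hby
  · linarith [(one_le_div ha).2 hax]
  · linarith [(one_le_div hb).2 hby]

lemma card_le_sum_div_add_sum_div {ι : Type*} (s : Finset ι) {f g : ι → ℝ} {a b : ℝ}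
    (hf : ∀ i ∈ s, 0 ≤ f i) (hg : ∀ i ∈ s, 0 ≤ g i) (ha : 0 < a) (hb : 0 < b)
    (h : ∀ i ∈ s, a ≤ f i ∨ b ≤ g i) :
    (#s : ℝ) ≤ (∑ i ∈ s, f i) / a + (∑ i ∈ s, g i) / b := by
  rw [sum_div, sum_div, ← sum_add_distrib, card_eq_sum_ones, Nat.cast_sum, Nat.cast_one]
  exact sum_le_sum fun i hi ↦
    one_le_div_add_div_of_le_or_le (hf i hi) (hg i hi) ha hb (h i hi)

lemma div_sqrt_mul_div_eq_sqrt {T D R : ℝ} (hT : 0 ≤ T) (hD : 0 < D) (hR : 0 < R) :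
    T / √(D * T / R) = √(T * R / D) := by
  rcases hT.eq_or_lt with rfl | hT
  · simp
  rw [eq_comm, Real.sqrt_eq_iff_mul_self_eq (by positivity) (by positivity), div_mul_div_comm,
    Real.mul_self_sqrt (by positivity)]
  field_simp

lemma mul_sqrt_mul_div_div_eq_sqrt {T D R : ℝ} (hT : 0 ≤ T) (hD : 0 < D) (hR : 0 < R) :
    R * √(D * T / R) / D = √(T * R / D) := by
  rw [eq_comm, Real.sqrt_eq_iff_mul_self_eq (by positivity) (by positivity), div_mul_div_comm,
    mul_mul_mul_comm, Real.mul_self_sqrt (by positivity)]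
  field_simp

/-- Epoch-count bound in DisLinUCB: if `P` epochs with lengths `n j` summing to at
most `T` and nonnegative log-det increments `g j` summing to at most `R` satisfy,
for every `j`, either `n j ≥ α` or `g j > D / α`, then
`P ≤ ⌈T/α⌉ + ⌈R*α/D⌉`; choosing `α = √(D*T/R)` gives `P ≤ 2*√(T*R/D) + 2`. -/
theorem stmt19 (P T : ℕ) (D R α : ℝ) (hD : 0 < D) (hR : 0 < R) (hα : 0 < α)
    (g : Fin P → ℝ) (hg : ∀ j, 0 ≤ g j) (hgsum : ∑ j, g j ≤ R)
    (n : Fin P → ℕ) (hnsum : ∑ j, n j ≤ T)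
    (halt : ∀ j, α ≤ n j ∨ D / α < g j) :
    (P : ℝ) ≤ (⌈(T : ℝ) / α⌉₊ : ℝ) + (⌈R * α / D⌉₊ : ℝ) ∧
      (α = Real.sqrt (D * T / R) → (P : ℝ) ≤ 2 * Real.sqrt (T * R / D) + 2) := by
  have hDα : 0 < D / α := div_pos hD hα
  have hP : (P : ℝ) ≤ T / α + R * α / D :=
    calc (P : ℝ) = #(univ : Finset (Fin P)) := by simp
      _ ≤ (∑ j, (n j : ℝ)) / α + (∑ j, g j) / (D / α) :=
        card_le_sum_div_add_sum_div _ (fun j _ ↦ by positivity) (fun j _ ↦ hg j) hα hDα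
          fun j _ ↦ (halt j).imp_right le_of_lt
      _ ≤ T / α + R / (D / α) := by gcongr; exact_mod_cast hnsum
      _ = T / α + R * α / D := by rw [div_div_eq_mul_div]
  refine ⟨hP.trans (add_le_add (Nat.le_ceil _) (Nat.le_ceil _)), fun hαeq ↦ ?_⟩
  rw [hαeq, div_sqrt_mul_div_eq_sqrt T.cast_nonneg hD hR,
    mul_sqrt_mul_div_div_eq_sqrt T.cast_nonneg hD hR] at hP
  linarith
end
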